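/- Let m ∈ ℕ and g ∈ PW_{[0,2π/m]}. Then for every j ∈ ℤ, Σ_{k∈ℤ} |g(j+km)|² = (1/m)·‖g‖²_{L²(ℝ)}. -/

import Mathlib

/-!
Write `g x = ∫ e^{ixt} u t dt` with `u` supported in `[0, T]`, `T = 2π/m`. Since `e^{ikmt}` is the
`k`-th character of `ℝ/Tℤ`, the samples `g (x + km)` are `T` times the Fourier coefficients on
`[0, T]` of `t ↦ e^{ixt} u t`, so Parseval gives `∑ₖ |g (x + km)|² = T ∫ |u|²` for every `x`.
Integrating this constant over one period `(0, m]` recovers `∫ |g|²`, hence `∫ |g|² = m T ∫ |u|²`.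
-/

open MeasureTheory

/-- `f ∈ PW_S`: `f` is the inverse Fourier transform (normalization
`f̂(t) = ∫ e^{-ixt} f(x) dx/(2π)`, so `f(x) = ∫ e^{ixt} f̂(t) dt`) of an
`L¹ ∩ L²` function supported in `S`. -/
def IsPW (S : Set ℝ) (f : ℝ → ℂ) : Prop :=
  ∃ g : ℝ → ℂ, Integrable g ∧ MemLp g 2 ∧ (∀ t, t ∉ S → g t = 0) ∧
    ∀ x : ℝ, f x = ∫ t : ℝ, Complex.exp (Complex.I * x * t) * g t

open Set Complex Real

lemma lintegral_eq_setLIntegral_Ioc_tsum {m : ℝ} (hm : 0 < m) {f : ℝ → ENNReal}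
    (hf : Measurable f) :
    ∫⁻ x, f x = ∫⁻ x in Ioc 0 m, ∑' k : ℤ, f (x + k * m) := by
  let e : ℤ ≃ AddSubgroup.zmultiples m := Equiv.ofBijective (fun k => ⟨k • m, k, rfl⟩)
    ⟨fun k l h => (zsmul_left_strictMono hm).injective (congrArg Subtype.val h),
      fun ⟨_, k, hk⟩ => ⟨k, Subtype.ext hk⟩⟩
  rw [(isAddFundamentalDomain_Ioc hm 0 volume).lintegral_eq_tsum'', zero_add, ← e.tsum_eq,
    ← lintegral_tsum fun k => by fun_prop]
  refine setLIntegral_congr_fun measurableSet_Ioc fun x _ => tsum_congr fun k => ?_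
  simp [e, add_comm x, zsmul_eq_mul]

lemma integral_eq_mul_of_hasSum_add_int_mul {f : ℝ → ℝ} (hf : Measurable f) (hf0 : 0 ≤ f)
    {m C : ℝ} (hm : 0 < m) (h : ∀ x, HasSum (fun k : ℤ => f (x + k * m)) C) :
    ∫ x, f x = m * C := by
  have hC : 0 ≤ C := (h 0).nonneg fun k => hf0 _
  have hper : ∀ x, ∑' k : ℤ, ENNReal.ofReal (f (x + k * m)) = ENNReal.ofReal C := fun x => by
    rw [← ENNReal.ofReal_tsum_of_nonneg (fun k => hf0 _) (h x).summable, (h x).tsum_eq]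
  rw [integral_eq_lintegral_of_nonneg_ae (.of_forall hf0) hf.aestronglyMeasurable,
    lintegral_eq_setLIntegral_Ioc_tsum hm hf.ennreal_ofReal,
    setLIntegral_congr_fun measurableSet_Ioc fun x _ => hper x, setLIntegral_const,
    Real.volume_Ioc, sub_zero, ENNReal.toReal_mul, ENNReal.toReal_ofReal hC,
    ENNReal.toReal_ofReal hm.le, mul_comm]

lemma norm_exp_I_mul_ofReal_mul_ofReal (x t : ℝ) : ‖cexp (I * x * t)‖ = 1 := by
  rw [show I * x * t = ((x * t : ℝ) : ℂ) * I by push_cast; ring, norm_exp_ofReal_mul_I]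

namespace PaleyWiener

-- The normalization of `IsPW`: no `2π` in the exponent, unlike `Real.fourierIntegralInv`.
noncomputable def invFourier (u : ℝ → ℂ) (x : ℝ) : ℂ := ∫ t : ℝ, cexp (I * x * t) * u t

lemma continuous_invFourier {u : ℝ → ℂ} (hu : Integrable u) : Continuous (invFourier u) := by
  refine continuous_of_dominated (bound := fun t => ‖u t‖) (fun x => ?_) (fun x => ?_) hu.norm ?_
  · exact (Continuous.aestronglyMeasurable (by fun_prop)).mul hu.1
  · exact .of_forall fun t => by rw [norm_mul, norm_exp_I_mul_ofReal_mul_ofReal, one_mul]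
  · exact .of_forall fun t => by fun_prop

variable {m : ℝ} {u : ℝ → ℂ}

lemma invFourier_add_int_mul (hm : 0 < m) (hu : ∀ t, t ∉ Icc 0 (2 * π / m) → u t = 0)
    (x : ℝ) (k : ℤ) :
    invFourier u (x + k * m) =
      (2 * π / m : ℝ) * fourierCoeffOn (by positivity : (0 : ℝ) < 2 * π / m)
        (fun t : ℝ => cexp (I * x * t) * u t) (-k) := by
  have hT : (0 : ℝ) < 2 * π / m := by positivity
  rw [fourierCoeffOn_eq_integral _ _ hT, sub_zero, neg_neg, intervalIntegral.integral_of_le hT.le,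
    ← integral_Icc_eq_integral_Ioc, invFourier,
    ← setIntegral_eq_integral_of_forall_compl_eq_zero fun t ht => by rw [hu t ht, mul_zero],
    real_smul, ← mul_assoc, ← ofReal_mul, mul_one_div_cancel hT.ne', ofReal_one, one_mul]
  refine setIntegral_congr_fun measurableSet_Icc fun t _ => ?_
  rw [fourier_coe_apply, smul_eq_mul, ← mul_assoc, ← Complex.exp_add]
  have hπ : (π : ℂ) ≠ 0 := ofReal_ne_zero.mpr pi_ne_zero
  have hm0 : (m : ℂ) ≠ 0 := ofReal_ne_zero.mpr hm.ne'
  congr 2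
  push_cast
  field_simp
  ring

lemma hasSum_sq_norm_invFourier_add_int_mul (hm : 0 < m) (hu2 : MemLp u 2)
    (hu : ∀ t, t ∉ Icc 0 (2 * π / m) → u t = 0) (x : ℝ) :
    HasSum (fun k : ℤ => ‖invFourier u (x + k * m)‖ ^ 2) (2 * π / m * ∫ t, ‖u t‖ ^ 2) := by
  have hT : (0 : ℝ) < 2 * π / m := by positivity
  set v : ℝ → ℂ := fun t => cexp (I * x * t) * u t
  have hv : ∀ t, ‖v t‖ = ‖u t‖ := fun t => by
    rw [norm_mul, norm_exp_I_mul_ofReal_mul_ofReal, one_mul]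
  have hv2 : MemLp v 2 := hu2.of_le ((Continuous.aestronglyMeasurable (by fun_prop)).mul hu2.1)
    (.of_forall fun t => (hv t).le)
  have hvu : ∫ t in 0..2 * π / m, ‖v t‖ ^ 2 = ∫ t, ‖u t‖ ^ 2 := by
    simp_rw [hv]
    rw [intervalIntegral.integral_of_le hT.le, ← integral_Icc_eq_integral_Ioc]
    exact setIntegral_eq_integral_of_forall_compl_eq_zero fun t ht => by simp [hu t ht]
  have parseval := (hasSum_sq_fourierCoeffOn hT (hv2.restrict _)).mul_left ((2 * π / m) ^ 2)
  rw [sub_zero, hvu, ← (Equiv.neg ℤ).hasSum_iff, smul_eq_mul, ← mul_assoc, sq,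
    mul_assoc _ _ (_⁻¹), mul_inv_cancel₀ hT.ne', mul_one] at parseval
  refine parseval.congr_fun fun k => ?_
  rw [Function.comp_apply, Equiv.neg_apply, invFourier_add_int_mul hm hu, norm_mul, mul_pow,
    norm_real, Real.norm_of_nonneg hT.le, sq]

end PaleyWiener

/-- exact sampling identity on the progression `{j+km}` for
functions with spectrum in `[0, 2π/m]`. -/
theorem stmt_7 (m : ℕ) (hm : 0 < m) (g : ℝ → ℂ)
    (hg : IsPW (Set.Icc 0 (2 * Real.pi / m)) g) (j : ℤ) :
    ∑' k : ℤ, ‖g ((j : ℝ) + k * m)‖ ^ 2 = (1 / m) * ∫ x : ℝ, ‖g x‖ ^ 2 := by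
  obtain ⟨u, hu1, hu2, hsupp, hrep⟩ := hg
  obtain rfl : g = PaleyWiener.invFourier u := funext hrep
  have hm' : (0 : ℝ) < m := Nat.cast_pos.mpr hm
  have hsamples := PaleyWiener.hasSum_sq_norm_invFourier_add_int_mul hm' hu2 hsupp
  have hmeas : Measurable fun x => ‖PaleyWiener.invFourier u x‖ ^ 2 :=
    ((PaleyWiener.continuous_invFourier hu1).norm.pow 2).measurable
  have hnorm := integral_eq_mul_of_hasSum_add_int_mul hmeas (fun _ => sq_nonneg _) hm' hsamples
  rw [(hsamples j).tsum_eq, hnorm]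
  field_simp
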